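/- There exists a universal constant D₁ > 0 such that for every ℓ ∈ (0,1], (ℓ / (4√π · sinh(ℓ/2))) · ∫₀¹ t^{-3/2} e^{-t/4 - ℓ²/(4t)} dt ≥ D₁ / ℓ. -/

import Mathlib

/-!
On `[ℓ²/2, ℓ²] ⊆ (0, 1]` the integrand is at least `e^{-3/4} ℓ⁻³`, so the integral is at least
`e^{-3/4} / (2ℓ)`; meanwhile `sinh (ℓ/2) ≤ (ℓ/2) e^{1/2}` keeps the prefactor above
`1 / (2√π e^{1/2})`. This gives the bound with `D₁ = e^{-5/4} / (4√π)`.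
-/

open Real MeasureTheory Set

lemma Real.sinh_le_mul_exp (x : ℝ) : sinh x ≤ x * exp x := by
  have h := add_one_le_exp (-(2 * x))
  have hsplit : exp (-x) = exp x * exp (-(2 * x)) := by rw [← exp_add]; ring_nf
  rw [sinh_eq]
  nlinarith [exp_pos (-(2 * x)), exp_pos x]

lemma Real.exp_neg_le_inv {x : ℝ} (hx : 0 < x) : exp (-x) ≤ x⁻¹ := by
  rw [exp_neg]
  exact inv_anti₀ hx (by linarith [add_one_le_exp x])

/-- The `t`-integrand of the contribution of a closed geodesic of length `ℓ`. -/
noncomputable def heatIntegrand (ℓ t : ℝ) : ℝ :=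
  t ^ (-(3 : ℝ) / 2) * exp (-t / 4 - ℓ ^ 2 / (4 * t))

lemma heatIntegrand_nonneg (ℓ : ℝ) {t : ℝ} (ht : 0 ≤ t) : 0 ≤ heatIntegrand ℓ t := by
  unfold heatIntegrand; positivity

lemma heatIntegrand_le {ℓ t : ℝ} (hℓ : ℓ ≠ 0) (ht : 0 < t) :
    heatIntegrand ℓ t ≤ 4 / ℓ ^ 2 * t ^ (-(1 : ℝ) / 2) := by
  have hexp : exp (-t / 4 - ℓ ^ 2 / (4 * t)) ≤ 4 * t / ℓ ^ 2 :=
    calc exp (-t / 4 - ℓ ^ 2 / (4 * t))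
        ≤ exp (-(ℓ ^ 2 / (4 * t))) := exp_le_exp.mpr (by linarith)
      _ ≤ (ℓ ^ 2 / (4 * t))⁻¹ := exp_neg_le_inv (by positivity)
      _ = 4 * t / ℓ ^ 2 := inv_div _ _
  have hpow : t ^ (-(3 : ℝ) / 2) * t = t ^ (-(1 : ℝ) / 2) := by
    rw [← rpow_add_one ht.ne']; norm_num
  calc heatIntegrand ℓ t ≤ t ^ (-(3 : ℝ) / 2) * (4 * t / ℓ ^ 2) :=
        mul_le_mul_of_nonneg_left hexp (by positivity)
    _ = 4 / ℓ ^ 2 * (t ^ (-(3 : ℝ) / 2) * t) := by ring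
    _ = 4 / ℓ ^ 2 * t ^ (-(1 : ℝ) / 2) := by rw [hpow]

lemma continuousOn_heatIntegrand (ℓ : ℝ) : ContinuousOn (heatIntegrand ℓ) (Ioi 0) := by
  intro t ht
  have ht0 : t ≠ 0 := (mem_Ioi.mp ht).ne'
  unfold heatIntegrand
  exact ((continuousAt_rpow_const t _ (Or.inl ht0)).mul
    (continuous_exp.continuousAt.comp (by fun_prop (disch := positivity)))).continuousWithinAt

lemma integrableOn_heatIntegrand {ℓ : ℝ} (hℓ : ℓ ≠ 0) (b : ℝ) :
    IntegrableOn (heatIntegrand ℓ) (Ioc 0 b) := by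
  have hdom : IntegrableOn (fun t : ℝ => 4 / ℓ ^ 2 * t ^ (-(1 : ℝ) / 2)) (Ioc 0 b) := by
    have h := intervalIntegral.intervalIntegrable_rpow' (r := -(1 : ℝ) / 2) (a := 0) (b := b)
      (by norm_num)
    exact (intervalIntegrable_iff.mp h).mono_set Ioc_subset_uIoc |>.const_mul _
  have hmeas : AEStronglyMeasurable (heatIntegrand ℓ) (volume.restrict (Ioc 0 b)) :=
    ((continuousOn_heatIntegrand ℓ).mono fun _ ht => ht.1).aestronglyMeasurable measurableSet_Ioc
  refine hdom.mono' hmeas ?_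
  refine (ae_restrict_iff' measurableSet_Ioc).mpr (ae_of_all _ fun t ht => ?_)
  rw [norm_of_nonneg (heatIntegrand_nonneg ℓ ht.1.le)]
  exact heatIntegrand_le hℓ ht.1

lemma exp_neg_three_fourths_div_le_heatIntegrand {ℓ t : ℝ} (hℓ : 0 < ℓ)
    (ht : t ∈ Icc (ℓ ^ 2 / 2) (ℓ ^ 2)) (ht1 : t ≤ 1) :
    exp (-(3 : ℝ) / 4) / ℓ ^ 3 ≤ heatIntegrand ℓ t := by
  obtain ⟨hlo, hhi⟩ := ht
  have ht0 : 0 < t := lt_of_lt_of_le (by positivity) hlo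
  have hpow : (ℓ ^ 3)⁻¹ ≤ t ^ (-(3 : ℝ) / 2) := by
    have hℓ3 : (ℓ ^ 2) ^ (-(3 : ℝ) / 2) = (ℓ ^ 3)⁻¹ := by
      rw [← rpow_natCast ℓ 2, ← rpow_mul hℓ.le, ← rpow_natCast, ← rpow_neg hℓ.le]; norm_num
    exact hℓ3 ▸ rpow_le_rpow_of_nonpos ht0 hhi (by norm_num)
  have hexp : exp (-(3 : ℝ) / 4) ≤ exp (-t / 4 - ℓ ^ 2 / (4 * t)) := by
    have hq : ℓ ^ 2 / (4 * t) ≤ 1 / 2 := by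
      rw [div_le_div_iff₀ (by positivity) (by norm_num)]; linarith
    exact exp_le_exp.mpr (by linarith)
  rw [div_eq_inv_mul, heatIntegrand]
  exact mul_le_mul hpow hexp (exp_pos _).le (by positivity)

lemma exp_neg_three_fourths_div_le_integral_heatIntegrand {ℓ : ℝ} (hℓ : 0 < ℓ) (hℓ1 : ℓ ≤ 1) :
    exp (-(3 : ℝ) / 4) / (2 * ℓ) ≤ ∫ t in Ioo 0 1, heatIntegrand ℓ t := by
  have hsq : ℓ ^ 2 ≤ 1 := pow_le_one₀ hℓ.le hℓ1
  have hsub : Ioo (ℓ ^ 2 / 2) (ℓ ^ 2) ⊆ Ioo 0 1 := fun t ht =>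
    ⟨lt_trans (by positivity) ht.1, ht.2.trans_le hsq⟩
  have hint : IntegrableOn (heatIntegrand ℓ) (Ioo 0 1) :=
    (integrableOn_heatIntegrand hℓ.ne' 1).mono_set Ioo_subset_Ioc_self
  calc exp (-(3 : ℝ) / 4) / (2 * ℓ)
      = exp (-(3 : ℝ) / 4) / ℓ ^ 3 * volume.real (Ioo (ℓ ^ 2 / 2) (ℓ ^ 2)) := by
        rw [Real.volume_real_Ioo_of_le (half_le_self (sq_nonneg ℓ))]; field_simp; ring
    _ ≤ ∫ t in Ioo (ℓ ^ 2 / 2) (ℓ ^ 2), heatIntegrand ℓ t :=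
        setIntegral_ge_of_const_le_real measurableSet_Ioo measure_Ioo_lt_top.ne
          (fun t ht => exp_neg_three_fourths_div_le_heatIntegrand hℓ (Ioo_subset_Icc_self ht)
            (ht.2.le.trans hsq)) (hint.mono_set hsub)
    _ ≤ ∫ t in Ioo 0 1, heatIntegrand ℓ t :=
        setIntegral_mono_set hint
          ((ae_restrict_iff' measurableSet_Ioo).mpr
            (ae_of_all _ fun t ht => heatIntegrand_nonneg ℓ ht.1.le))
          hsub.eventuallyLE

/-- There exists a universal constant `D₁ > 0` such that for every `ℓ ∈ (0,1]`,
`(ℓ / (4√π · sinh(ℓ/2))) · ∫₀¹ t^{-3/2} e^{-t/4 - ℓ²/(4t)} dt ≥ D₁ / ℓ`. -/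
theorem stmt_2 :
    ∃ D₁ : ℝ, 0 < D₁ ∧ ∀ ℓ : ℝ, 0 < ℓ → ℓ ≤ 1 →
      (ℓ / (4 * Real.sqrt π * Real.sinh (ℓ/2))) *
          ∫ t in Set.Ioo (0 : ℝ) 1, t ^ (-(3 : ℝ)/2) * Real.exp (-t/4 - ℓ^2 / (4*t))
        ≥ D₁ / ℓ := by
  refine ⟨exp (-(5 : ℝ) / 4) / (4 * √π), by positivity, fun ℓ hℓ hℓ1 => ?_⟩
  have hsinh : sinh (ℓ / 2) ≤ ℓ / 2 * exp (1 / 2) :=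
    (sinh_le_mul_exp _).trans
      (mul_le_mul_of_nonneg_left (exp_le_exp.mpr (by linarith)) (by positivity))
  have hprefactor : 1 / (2 * √π * exp (1 / 2)) ≤ ℓ / (4 * √π * sinh (ℓ / 2)) := by
    rw [div_le_div_iff₀ (by positivity) (by positivity)]
    nlinarith [mul_le_mul_of_nonneg_left hsinh (by positivity : (0 : ℝ) ≤ 4 * √π)]
  have hexp : exp (-(5 : ℝ) / 4) * exp (1 / 2) = exp (-(3 : ℝ) / 4) := by
    rw [← exp_add]; norm_num
  calc exp (-(5 : ℝ) / 4) / (4 * √π) / ℓ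
      = 1 / (2 * √π * exp (1 / 2)) * (exp (-(3 : ℝ) / 4) / (2 * ℓ)) := by
        rw [← hexp]; field_simp; ring
    _ ≤ ℓ / (4 * √π * sinh (ℓ / 2)) * ∫ t in Ioo 0 1, heatIntegrand ℓ t :=
        mul_le_mul hprefactor (exp_neg_three_fourths_div_le_integral_heatIntegrand hℓ hℓ1)
          (by positivity) (by positivity)
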